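/- Let k be a non-negative integer and let τ be a locally compact Hausdorff shift-continuous topology on B⁰(B_k) in which the adjoined zero 0* is not isolated. Then for every open neighborhood U of 0* there exists a non-negative integer n_U such that [0,m] ⊆ U for every integer m > n_U. -/

import Mathlib

open Ordinal Set Topology

noncomputable section

/-- The `α`-bicyclic monoid: pairs of ordinals below `ω ^ α`. -/
def Bicyclic (α : Ordinal) : Type 1 :=
  {p : Ordinal × Ordinal // p.1 < ω ^ α ∧ p.2 < ω ^ α}

namespace Bicyclic

variable {α : Ordinal}

def mk (a b : Ordinal) (ha : a < ω ^ α) (hb : b < ω ^ α) : Bicyclic α :=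
  ⟨(a, b), ha, hb⟩

instance : Mul (Bicyclic α) :=
  ⟨fun x y =>
    if x.val.2 ≤ y.val.1 then
      ⟨(x.val.1 + (y.val.1 - x.val.2), y.val.2),
        (principal_add_omega0_opow α) x.2.1
          (lt_of_le_of_lt (Ordinal.sub_le_self _ _) y.2.1),
        y.2.2⟩
    else
      ⟨(x.val.1, y.val.2 + (x.val.2 - y.val.1)),
        x.2.1,
        (principal_add_omega0_opow α) y.2.2
          (lt_of_le_of_lt (Ordinal.sub_le_self _ _) x.2.2)⟩⟩

instance : One (Bicyclic α) :=
  ⟨⟨(0, 0), opow_pos α omega0_pos, opow_pos α omega0_pos⟩⟩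

end Bicyclic

/-- The Bruck extension of a semigroup `S`. -/
def Bruck (S : Type*) : Type _ := ℕ × S × ℕ

def Bruck.mk {S : Type*} (n : ℕ) (s : S) (m : ℕ) : Bruck S := (n, s, m)

instance {S : Type*} [Mul S] : Mul (Bruck S) :=
  ⟨fun x y =>
    if x.2.2 < y.1 then (x.1 + y.1 - x.2.2, y.2.1, y.2.2)
    else if y.1 < x.2.2 then (x.1, x.2.1, y.2.2 + x.2.2 - y.1)
    else (x.1, x.2.1 * y.2.1, y.2.2)⟩

/-- The Bruck extension of `S` with an adjoined (absorbing) zero `0*`. -/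
abbrev BruckZero (S : Type*) := WithZero (Bruck S)

/-- The box `[n,m]` in the Bruck extension with zero. -/
def box (S : Type*) (n m : ℕ) : Set (BruckZero S) :=
  {x | ∃ s : S, x = ↑(Bruck.mk n s m)}

/-- A topology on `X` is shift-continuous if all two-sided shifts `x ↦ a * x * b`
are continuous. -/
def ShiftContinuous (X : Type*) [Mul X] [TopologicalSpace X] : Prop :=
  ∀ a b : X, Continuous fun x => a * x * b

/-!
Right multiplication by the idempotent `(m+1, 1, m+1)` fixes every element whose column exceeds
`m + 1` but moves every element of column `m`. By separate continuity and the Hausdorff property,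
points of a compact set whose columns tend to infinity can therefore only accumulate at `0*`, so
they converge to `0*`.

Let `K ⊆ U` be a compact neighbourhood of `0*`. As `0*` is not isolated, `K` contains points of
arbitrarily large column; following each along its row to the last point before the row leaves
`K` gives points of `K` with columns tending to infinity whose right shifts by `(0, 1, 1)` lie
outside `K`, which is impossible. So some row has a whole tail `(c, s, D + i)` in `K`; this tail
tends to `0*`, hence so do its left shift `(0, 1, D + i + 1)` by `(0, 1, c + 1)` and then
`(0, s, j) = (0, s, 0) · (0, 1, j)` for every `s`. Finally, if `[0, m] ⊈ K` for infinitely many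
`m`, the first return of each offending row `(0, s, ·)` to `K` gives points `(0, s, e + 1) ∈ K`
with `e → ∞` whose right shifts `(0, s, e)` by `(1, 1, 0)` lie outside `K`, a contradiction again.
-/

open Filter Function

namespace Bruck

variable {S : Type*}

theorem mk_mul_mk [Mul S] (a : ℕ) (s : S) (b c : ℕ) (t : S) (d : ℕ) :
    mk a s b * mk c t d =
      if b < c then mk (a + c - b) t d
      else if c < b then mk a s (d + b - c)
      else mk a (s * t) d :=
  rfl

theorem mk_mul_mk_of_lt [Mul S] (c : ℕ) (s : S) {d p : ℕ} (t : S) (h : p < d) :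
    mk c s d * mk p t p = mk c s d := by
  rw [mk_mul_mk, if_neg (by omega), if_pos h, Nat.add_sub_cancel_left]

theorem mk_mul_mk_succ_succ [Mul S] (n : ℕ) (s : S) (m : ℕ) (t : S) :
    mk n s m * mk (m + 1) t (m + 1) = mk (n + 1) t (m + 1) := by
  rw [mk_mul_mk, if_pos (by omega)]
  congr 1
  omega

theorem mk_zero_succ_mul_mk [Mul S] (t : S) (r : ℕ) (s : S) (d : ℕ) :
    mk 0 t (r + 1) * mk r s d = mk 0 t (d + 1) := by
  rw [mk_mul_mk, if_neg (by omega), if_pos (by omega)]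
  congr 2
  omega

variable [MulOneClass S]

instance : MulOneClass (Bruck S) where
  one := mk 0 1 0
  mul := (· * ·)
  one_mul := by
    rintro ⟨a, s, b⟩
    show mk 0 1 0 * mk a s b = mk a s b
    rw [mk_mul_mk]
    split_ifs with h₁ h₂
    · rw [Nat.zero_add, Nat.sub_zero]
    · omega
    · rw [one_mul, show a = 0 by omega]
  mul_one := by
    rintro ⟨a, s, b⟩
    show mk a s b * mk 0 1 0 = mk a s b
    rw [mk_mul_mk]
    split_ifs with h₁ h₂
    · omega
    · rw [Nat.zero_add, Nat.sub_zero]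
    · rw [mul_one, show b = 0 by omega]

theorem mk_mul_mk_zero_one (c : ℕ) (s : S) (d n : ℕ) :
    mk c s d * mk 0 1 n = mk c s (d + n) := by
  rw [mk_mul_mk]
  split_ifs with h₁ h₂
  · omega
  · rw [Nat.sub_zero, Nat.add_comm]
  · rw [mul_one, show d = 0 by omega, Nat.zero_add]

theorem mk_succ_mul_mk_one_one_zero (c : ℕ) (s : S) (e : ℕ) :
    mk c s (e + 1) * mk 1 1 0 = mk c s e := by
  rw [mk_mul_mk]
  split_ifs with h₁ h₂
  · omega
  · rw [Nat.zero_add, Nat.add_sub_cancel]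
  · rw [mul_one, show e = 0 by omega]

end Bruck

namespace Bicyclic

variable {α : Ordinal}

theorem val_mul (x y : Bicyclic α) :
    (x * y).val = if x.val.2 ≤ y.val.1 then (x.val.1 + (y.val.1 - x.val.2), y.val.2)
      else (x.val.1, y.val.2 + (x.val.2 - y.val.1)) :=
  apply_ite Subtype.val _ _ _

theorem val_one : (1 : Bicyclic α).val = (0, 0) := rfl

protected theorem one_mul (s : Bicyclic α) : 1 * s = s := by
  apply Subtype.ext
  rw [val_mul, val_one]
  dsimp only
  rw [if_pos zero_le, Ordinal.sub_zero, zero_add]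

protected theorem mul_one (s : Bicyclic α) : s * 1 = s := by
  apply Subtype.ext
  rw [val_mul, val_one]
  dsimp only
  split_ifs with h
  · have h0 := nonpos_iff_eq_zero.1 h
    rw [h0, Ordinal.sub_self, add_zero]
    exact Prod.ext rfl h0.symm
  · rw [Ordinal.sub_zero, zero_add]

instance : MulOneClass (Bicyclic α) where
  one := 1
  mul := (· * ·)
  one_mul := Bicyclic.one_mul
  mul_one := Bicyclic.mul_one

end Bicyclic

theorem ClusterPt.isFixedPt_of_eventually_isFixedPt {X : Type*} [TopologicalSpace X] [T2Space X]
    {σ : X → X} {q : X} {F : Filter X} (hq : ClusterPt q F) (hσ : ContinuousAt σ q)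
    (hfix : ∀ᶠ x in F, IsFixedPt σ x) : IsFixedPt σ q :=
  haveI := hq.neBot
  tendsto_nhds_unique_of_eventuallyEq (hσ.tendsto.mono_left inf_le_left)
    (tendsto_id.mono_left inf_le_left) (hfix.filter_mono inf_le_right)

namespace ShiftContinuous

variable {X : Type*} [TopologicalSpace X]

theorem continuous_mul_left [MulOneClass X] (h : ShiftContinuous X) (a : X) :
    Continuous (a * ·) := by
  simpa only [mul_one] using h a 1

theorem continuous_mul_right [MulOneClass X] (h : ShiftContinuous X) (b : X) :
    Continuous (· * b) := by
  simpa only [one_mul] using h 1 b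

theorem tendsto_mul_left_nhds_zero [MulZeroOneClass X] (h : ShiftContinuous X) (a : X) :
    Tendsto (a * ·) (𝓝 0) (𝓝 0) := by
  simpa only [mul_zero] using (h.continuous_mul_left a).tendsto 0

theorem tendsto_mul_right_nhds_zero [MulZeroOneClass X] (h : ShiftContinuous X) (b : X) :
    Tendsto (· * b) (𝓝 0) (𝓝 0) := by
  simpa only [zero_mul] using (h.continuous_mul_right b).tendsto 0

end ShiftContinuous

namespace BruckZero

variable {S : Type*} [MulOneClass S] [TopologicalSpace (BruckZero S)]

theorem tendsto_nhds_zero_of_tendsto_col [T2Space (BruckZero S)]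
    (hτ : ShiftContinuous (BruckZero S)) {K : Set (BruckZero S)} (hK : IsCompact K)
    {ι : Type*} {l : Filter ι} {u : ι → Bruck S} (huK : ∀ᶠ i in l, (u i : BruckZero S) ∈ K)
    (hcol : Tendsto (fun i => (u i).2.2) l atTop) :
    Tendsto (fun i => (u i : BruckZero S)) l (𝓝 0) := by
  refine hK.tendsto_nhds_of_unique_mapClusterPt huK fun q _ hq => ?_
  induction q using WithZero.recZeroCoe with
  | zero => rfl
  | coe b =>
    obtain ⟨n, t, m⟩ := b
    let e : BruckZero S := (Bruck.mk (m + 1) 1 (m + 1) : Bruck S)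
    have hfix : ∀ᶠ i in l, IsFixedPt (· * e) (u i : BruckZero S) :=
      (hcol.eventually_gt_atTop (m + 1)).mono fun i hi => by
        show ((u i * Bruck.mk (m + 1) 1 (m + 1) : Bruck S) : BruckZero S) = u i
        exact congrArg _ (Bruck.mk_mul_mk_of_lt _ _ _ hi)
    have hq' := hq.isFixedPt_of_eventually_isFixedPt
      (hτ.continuous_mul_right e).continuousAt (eventually_map.2 hfix)
    have : (Bruck.mk (n + 1) 1 (m + 1) : Bruck S) = Bruck.mk n t m := by
      rw [← Bruck.mk_mul_mk_succ_succ n t m]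
      exact WithZero.coe_injective hq'
    exact absurd (congrArg Prod.fst this) n.succ_ne_self

theorem exists_large_col_mem_of_mem_nhds_zero (hτ : ShiftContinuous (BruckZero S))
    (h0 : ¬IsOpen ({0} : Set (BruckZero S))) {W : Set (BruckZero S)}
    (hW : W ∈ 𝓝 (0 : BruckZero S)) (n : ℕ) :
    ∃ c s d, n ≤ d ∧ ((Bruck.mk c s d : Bruck S) : BruckZero S) ∈ W := by
  have : (𝓝[≠] (0 : BruckZero S)).NeBot := ⟨mt (isOpen_singleton_iff_punctured_nhds _).2 h0⟩
  have hx : ∀ᶠ x in 𝓝[≠] (0 : BruckZero S), x * ((Bruck.mk 0 1 n : Bruck S) : BruckZero S) ∈ W ∧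
      x ≠ 0 :=
    Eventually.and (mem_nhdsWithin_of_mem_nhds (hτ.tendsto_mul_right_nhds_zero _ hW))
      self_mem_nhdsWithin
  obtain ⟨x, hxW, hx0⟩ := hx.exists
  obtain ⟨⟨c, s, d⟩, rfl⟩ := WithZero.ne_zero_iff_exists.1 hx0
  refine ⟨c, s, d + n, Nat.le_add_left n d, ?_⟩
  rw [← Bruck.mk_mul_mk_zero_one, WithZero.coe_mul]
  exact hxW

variable [T2Space (BruckZero S)] (hτ : ShiftContinuous (BruckZero S))
  (h0 : ¬IsOpen ({0} : Set (BruckZero S))) {K : Set (BruckZero S)} (hK : IsCompact K)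
  (hK0 : K ∈ 𝓝 (0 : BruckZero S))
include hτ h0 hK hK0

theorem exists_row_tail_mem :
    ∃ c s D, ∀ i, ((Bruck.mk c s (D + i) : Bruck S) : BruckZero S) ∈ K := by
  by_contra! hexit
  have hlast : ∀ n, ∃ c s e, n ≤ e ∧ ((Bruck.mk c s e : Bruck S) : BruckZero S) ∈ K ∧
      ((Bruck.mk c s (e + 1) : Bruck S) : BruckZero S) ∉ K := by
    intro n
    obtain ⟨c, s, d, hnd, hd⟩ := exists_large_col_mem_of_mem_nhds_zero hτ h0 hK0 n
    obtain ⟨i, hi, hi1⟩ := Nat.exists_not_and_succ_of_not_zero_of_exists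
      (p := fun i => ((Bruck.mk c s (d + i) : Bruck S) : BruckZero S) ∉ K)
      (not_not.2 hd) (hexit c s d)
    exact ⟨c, s, d + i, by omega, not_not.1 hi, hi1⟩
  choose c s e hne heK hexK using hlast
  have hlim := tendsto_nhds_zero_of_tendsto_col hτ hK
    (u := fun n => Bruck.mk (c n) (s n) (e n)) (.of_forall heK) (tendsto_atTop_mono hne tendsto_id)
  obtain ⟨n, hn⟩ := ((hτ.tendsto_mul_right_nhds_zero
    ((Bruck.mk 0 1 1 : Bruck S) : BruckZero S)).comp hlim |>.eventually_mem hK0).exists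
  rw [comp_apply, ← WithZero.coe_mul, Bruck.mk_mul_mk_zero_one] at hn
  exact hexK n hn

theorem tendsto_mk_zero_one_atTop :
    Tendsto (fun j => ((Bruck.mk 0 1 j : Bruck S) : BruckZero S)) atTop (𝓝 0) := by
  obtain ⟨c, s, D, htail⟩ := exists_row_tail_mem hτ h0 hK hK0
  have hrow := tendsto_nhds_zero_of_tendsto_col hτ hK
    (u := fun i => Bruck.mk c s (D + i)) (.of_forall htail)
    (tendsto_atTop_mono (Nat.le_add_left · D) tendsto_id)
  have hshift := (hτ.tendsto_mul_left_nhds_zero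
    ((Bruck.mk 0 1 (c + 1) : Bruck S) : BruckZero S)).comp hrow
  refine (tendsto_add_atTop_iff_nat (D + 1)).1 (hshift.congr fun i => ?_)
  rw [comp_apply, ← WithZero.coe_mul, Bruck.mk_zero_succ_mul_mk,
    show D + i + 1 = i + (D + 1) by omega]

theorem tendsto_mk_zero_atTop (s : S) :
    Tendsto (fun j => ((Bruck.mk 0 s j : Bruck S) : BruckZero S)) atTop (𝓝 0) := by
  simpa only [comp_def, ← WithZero.coe_mul, Bruck.mk_mul_mk_zero_one, Nat.zero_add] using
    (hτ.tendsto_mul_left_nhds_zero ((Bruck.mk 0 s 0 : Bruck S) : BruckZero S)).comp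
      (tendsto_mk_zero_one_atTop hτ h0 hK hK0)

theorem eventually_box_zero_subset : ∀ᶠ m in atTop, box S 0 m ⊆ K := by
  by_contra hbad
  have hlast : ∀ n, ∃ s e, n ≤ e ∧ ((Bruck.mk 0 s e : Bruck S) : BruckZero S) ∉ K ∧
      ((Bruck.mk 0 s (e + 1) : Bruck S) : BruckZero S) ∈ K := by
    intro n
    obtain ⟨m, hnm, hm⟩ := frequently_atTop.1 (not_eventually.1 hbad) n
    obtain ⟨_, ⟨s, rfl⟩, hsK⟩ := not_subset.1 hm
    obtain ⟨i, hi, hi1⟩ := Nat.exists_not_and_succ_of_not_zero_of_exists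
      (p := fun i => ((Bruck.mk 0 s (m + i) : Bruck S) : BruckZero S) ∈ K) hsK
      (((tendsto_mk_zero_atTop hτ h0 hK hK0 s).comp
        (tendsto_atTop_mono (Nat.le_add_left · m) tendsto_id)).eventually_mem hK0).exists
    exact ⟨s, m + i, by omega, hi, hi1⟩
  choose s e hne heK hesK using hlast
  have hlim := tendsto_nhds_zero_of_tendsto_col hτ hK
    (u := fun n => Bruck.mk 0 (s n) (e n + 1)) (.of_forall hesK)
    (tendsto_atTop_mono (fun n => (hne n).trans (Nat.le_succ _)) tendsto_id)
  obtain ⟨n, hn⟩ := ((hτ.tendsto_mul_right_nhds_zero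
    ((Bruck.mk 1 1 0 : Bruck S) : BruckZero S)).comp hlim |>.eventually_mem hK0).exists
  rw [comp_apply, ← WithZero.coe_mul, Bruck.mk_succ_mul_mk_one_one_zero] at hn
  exact heK n hn

end BruckZero

/-- For a locally compact Hausdorff shift-continuous topology on
`B⁰(B_k)` with non-isolated zero, each open neighborhood `U` of `0*` contains the
whole box `[0,m]` for all sufficiently large `m`. -/
theorem zero_row_boxes_eventually_contained (k : ℕ)
    [TopologicalSpace (BruckZero (Bicyclic k))] [T2Space (BruckZero (Bicyclic k))]
    [LocallyCompactSpace (BruckZero (Bicyclic k))]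
    (hτ : ShiftContinuous (BruckZero (Bicyclic k)))
    (h0 : ¬ IsOpen ({0} : Set (BruckZero (Bicyclic k))))
    (U : Set (BruckZero (Bicyclic k)))
    (hU : IsOpen U) (h0U : (0 : BruckZero (Bicyclic k)) ∈ U) :
    ∃ nU : ℕ, ∀ m : ℕ, nU < m → box (Bicyclic k) 0 m ⊆ U := by
  obtain ⟨K, hK0, hKU, hK⟩ := local_compact_nhds (hU.mem_nhds h0U)
  obtain ⟨N, hN⟩ := (BruckZero.eventually_box_zero_subset hτ h0 hK hK0).exists_forall_of_atTop
  exact ⟨N, fun m hm => (hN m hm.le).trans hKU⟩
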